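/- arXiv:1212.0833 — 2 statements merged into one kernel-verified Lean document; each statement's English description precedes it below -/
import Mathlib

section
/- A 3-dimensional real Lie algebra g admits a contact form (some η ∈ g* with η ∧ dη ≠ 0, where dη(X,Y) = -η([X,Y])) if and only if there exist X, Y ∈ g with [X,Y] ∉ span{X, Y}. -/
open scoped BigOperators

/-- The Chevalley–Eilenberg differential of a 1-form `η` on a real Lie algebra `L` is
`dη(X,Y) = -η [X,Y]`.  `etaWedgeDPow η n` is the alternating `(2n+1)`-form `η ∧ (dη)^n`,
written out via the usual (shuffle-normalized) formula: a sum over all permutations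
divided by the overcounting factor `2^n * n!`. -/
noncomputable def etaWedgeDPow {L : Type*} [LieRing L] [LieAlgebra ℝ L]
    (η : Module.Dual ℝ L) (n : ℕ) : (Fin (2 * n + 1) → L) → ℝ :=
  fun v =>
    ((2 : ℝ) ^ n * n.factorial)⁻¹ *
      ∑ σ : Equiv.Perm (Fin (2 * n + 1)),
        ((Equiv.Perm.sign σ : ℤ) : ℝ) *
          (η (v (σ ⟨0, by omega⟩)) *
            ∏ i : Fin n,
              (-η ⁅v (σ ⟨2 * (i : ℕ) + 1, by omega⟩), v (σ ⟨2 * (i : ℕ) + 2, by omega⟩)⁆))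
lemma eWD1 {L : Type*} [LieRing L] [LieAlgebra ℝ L] (η : Module.Dual ℝ L) (v : Fin 3 → L) :
    etaWedgeDPow η 1 v =
      -(η (v 0) * η ⁅v 1, v 2⁆ + η (v 1) * η ⁅v 2, v 0⁆ + η (v 2) * η ⁅v 0, v 1⁆) := by
  have huniv : (Finset.univ : Finset (Equiv.Perm (Fin 3))) =
    {1, Equiv.swap 0 1, Equiv.swap 0 2, Equiv.swap 1 2,
      Equiv.swap 0 1 * Equiv.swap 1 2, Equiv.swap 1 2 * Equiv.swap 0 1} := by decide
  unfold etaWedgeDPow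
  rw [huniv]
  rw [Finset.sum_insert (by decide), Finset.sum_insert (by decide),
    Finset.sum_insert (by decide), Finset.sum_insert (by decide),
    Finset.sum_insert (by decide), Finset.sum_singleton]
  simp only [Fin.prod_univ_one, Fin.val_zero]
  norm_num [show (⟨2, by omega⟩ : Fin 3) = 2 from rfl, Equiv.swap_apply_def, Fin.ext_iff]
  have e1 : η ⁅v 2, v 1⁆ = -η ⁅v 1, v 2⁆ := by rw [← lie_skew, map_neg]
  have e2 : η ⁅v 0, v 2⁆ = -η ⁅v 2, v 0⁆ := by rw [← lie_skew, map_neg]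
  have e3 : η ⁅v 1, v 0⁆ = -η ⁅v 0, v 1⁆ := by rw [← lie_skew, map_neg]
  rw [e1, e2, e3]; ring

/-- If `c` is in the span of `a, b`, the cyclic sum vanishes. -/
lemma Saux {L : Type*} [LieRing L] [LieAlgebra ℝ L] (η : Module.Dual ℝ L) (a b c : L)
    (hc : c ∈ Submodule.span ℝ ({a, b} : Set L)) :
    η a * η ⁅b, c⁆ + η b * η ⁅c, a⁆ + η c * η ⁅a, b⁆ = 0 := by
  obtain ⟨x, y, rfl⟩ := Submodule.mem_span_pair.mp hc
  have e : η ⁅b, a⁆ = -η ⁅a, b⁆ := by rw [← lie_skew, map_neg]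
  simp only [lie_add, lie_smul, add_lie, smul_lie, lie_self, smul_zero, add_zero, zero_add,
    map_add, map_smul, smul_eq_mul, e]
  ring

lemma Szero {L : Type*} [LieRing L] [LieAlgebra ℝ L]
    (h : ∀ X Y : L, ⁅X, Y⁆ ∈ Submodule.span ℝ ({X, Y} : Set L))
    (η : Module.Dual ℝ L) (a b c : L) :
    η a * η ⁅b, c⁆ + η b * η ⁅c, a⁆ + η c * η ⁅a, b⁆ = 0 := by
  by_cases hc : c ∈ Submodule.span ℝ ({a, b} : Set L)
  · exact Saux η a b c hc
  by_cases ha : a ∈ Submodule.span ℝ ({b, c} : Set L)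
  · have := Saux η b c a ha; linarith
  by_cases hb : b ∈ Submodule.span ℝ ({c, a} : Set L)
  · have := Saux η c a b hb; linarith
  -- independent case
  have hind : ∀ x y z : ℝ, x • a + y • b + z • c = 0 → x = 0 ∧ y = 0 ∧ z = 0 := by
    intro x y z hxyz
    have hz : z = 0 := by
      by_contra hz
      refine hc (Submodule.mem_span_pair.mpr ⟨z⁻¹ * -x, z⁻¹ * -y, ?_⟩)
      have h2 : z⁻¹ • (x • a + y • b + z • c) = z⁻¹ • (0 : L) := by rw [hxyz]
      rw [smul_zero] at h2
      linear_combination (norm := module) -h2 + (inv_mul_cancel₀ hz) • c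
    subst hz
    have hy : y = 0 := by
      by_contra hy
      refine hb (Submodule.mem_span_pair.mpr ⟨0, y⁻¹ * -x, ?_⟩)
      have h2 : y⁻¹ • (x • a + y • b + (0:ℝ) • c) = y⁻¹ • (0 : L) := by rw [hxyz]
      rw [smul_zero] at h2
      linear_combination (norm := module) -h2 + (inv_mul_cancel₀ hy) • b
    subst hy
    have hx : x = 0 := by
      by_contra hx
      refine ha (Submodule.mem_span_pair.mpr ⟨0, x⁻¹ * -0, ?_⟩)
      have h2 : x⁻¹ • (x • a + (0:ℝ) • b + (0:ℝ) • c) = x⁻¹ • (0 : L) := by rw [hxyz]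
      rw [smul_zero] at h2
      linear_combination (norm := module) -h2 + (inv_mul_cancel₀ hx) • a
    exact ⟨hx, rfl, rfl⟩
  obtain ⟨β, γ, hbc⟩ := Submodule.mem_span_pair.mp (h b c)
  obtain ⟨γ₁, α₁, hca⟩ := Submodule.mem_span_pair.mp (h c a)
  obtain ⟨α, β₂, hab⟩ := Submodule.mem_span_pair.mp (h a b)
  have sk_ac : ⁅a, c⁆ = -⁅c, a⁆ := by rw [← lie_skew a c]
  have sk_cb : ⁅c, b⁆ = -⁅b, c⁆ := by rw [← lie_skew c b]
  -- relation 1 : from ⁅a+b, c⁆ ∈ span {a+b, c}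
  obtain ⟨m₁, n₁, h1⟩ := Submodule.mem_span_pair.mp (h (a + b) c)
  rw [add_lie, sk_ac, ← hca, ← hbc] at h1
  have r1 : β + α₁ = 0 := by
    have k1 := hind (m₁ + α₁) (m₁ - β) (n₁ + γ₁ - γ)
      (by linear_combination (norm := module) h1)
    linarith [k1.1, k1.2.1]
  -- relation 2 : from ⁅a, b+c⁆ ∈ span {a, b+c}
  obtain ⟨m₂, n₂, h2⟩ := Submodule.mem_span_pair.mp (h a (b + c))
  rw [lie_add, sk_ac, ← hca, ← hab] at h2
  have r2 : β₂ + γ₁ = 0 := by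
    have k2 := hind (m₂ - α + α₁) (n₂ - β₂) (n₂ + γ₁)
      (by linear_combination (norm := module) h2)
    linarith [k2.2.1, k2.2.2]
  -- relation 3 : from ⁅a+c, b⁆ ∈ span {a+c, b}
  obtain ⟨m₃, n₃, h3⟩ := Submodule.mem_span_pair.mp (h (a + c) b)
  rw [add_lie, sk_cb, ← hbc, ← hab] at h3
  have r3 : α + γ = 0 := by
    have k3 := hind (m₃ - α) (n₃ - β₂ + β) (m₃ + γ)
      (by linear_combination (norm := module) h3)
    linarith [k3.1, k3.2.2]
  have vbc : η ⁅b, c⁆ = β * η b + γ * η c := by rw [← hbc]; simp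
  have vca : η ⁅c, a⁆ = γ₁ * η c + α₁ * η a := by rw [← hca]; simp
  have vab : η ⁅a, b⁆ = α * η a + β₂ * η b := by rw [← hab]; simp
  rw [vbc, vca, vab]
  linear_combination η a * η b * r1 + η b * η c * r2 + η a * η c * r3


/-- A 3-dimensional real Lie algebra admits a contact form iff
there are `X, Y` with `[X,Y] ∉ span {X, Y}`. -/
theorem stmt5 {L : Type*} [LieRing L] [LieAlgebra ℝ L] [FiniteDimensional ℝ L]
    (hdim : Module.finrank ℝ L = 3) :
    (∃ η : Module.Dual ℝ L, etaWedgeDPow η 1 ≠ 0) ↔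
      ∃ X Y : L, ⁅X, Y⁆ ∉ Submodule.span ℝ ({X, Y} : Set L) := by
  constructor
  · rintro ⟨η, hη⟩
    by_contra hcon
    push_neg at hcon
    apply hη
    funext v
    rw [eWD1, Szero hcon η (v 0) (v 1) (v 2), neg_zero]
    rfl
  · rintro ⟨X, Y, hXY⟩
    set W := Submodule.span ℝ ({X, Y} : Set L) with hW
    set Z := ⁅X, Y⁆ with hZdef
    have hZ : W.mkQ Z ≠ 0 := by
      simpa [Submodule.mkQ_apply, Submodule.Quotient.mk_eq_zero] using hXY
    obtain ⟨g, hg⟩ : ∃ g : Module.Dual ℝ (L ⧸ W), g (W.mkQ Z) ≠ 0 := by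
      by_contra hcon
      push_neg at hcon
      exact hZ ((Module.forall_dual_apply_eq_zero_iff ℝ (W.mkQ Z)).mp hcon)
    refine ⟨g.comp W.mkQ, fun h0 => ?_⟩
    have hX : (g.comp W.mkQ) X = 0 := by
      have : X ∈ W := Submodule.subset_span (by simp)
      simp [Submodule.mkQ_apply, (Submodule.Quotient.mk_eq_zero W).mpr this]
    have hY : (g.comp W.mkQ) Y = 0 := by
      have : Y ∈ W := Submodule.subset_span (by simp)
      simp [Submodule.mkQ_apply, (Submodule.Quotient.mk_eq_zero W).mpr this]
    have := congrFun h0 ![X, Y, Z]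
    rw [eWD1] at this
    simp only [Matrix.cons_val_zero, Matrix.cons_val_one, Matrix.head_cons,
      Matrix.cons_val_two, Matrix.tail_cons, hX, hY, Pi.zero_apply, zero_mul, zero_add,
      add_zero, neg_eq_zero] at this
    have hgZ : (g.comp W.mkQ) Z ≠ 0 := hg
    rw [← hZdef] at this
    exact hgZ (by nlinarith [this])
end

section
/- The 5-dimensional filiform real nilpotent Lie algebra L_{5,6}, with basis X1,...,X5 and nontrivial brackets [X1,X2] = X3, [X1,X3] = X4, [X1,X4] = X5, [X2,X3] = X5, admits a contact form: the dual basis element x5 satisfies x5 ∧ (dx5)^2 ≠ 0. -/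
open scoped BigOperators

/-! On the basis `X₁, …, X₅`, the form `x₅ ∧ (dx₅)²` only sees the numbers `x₅(Xᵢ) = δᵢ₅` and
`x₅⁅Xᵢ, Xⱼ⁆`, i.e. `dx₅ = -(x₁ ∧ x₄ + x₂ ∧ x₃)`. What remains is an alternating sum over `S₅` with
integer entries; it equals `8`, so `(x₅ ∧ (dx₅)²)(X₁, …, X₅) = 1`. -/

section WedgeSum

variable {R : Type*} [CommRing R] {n : ℕ}

def wedgeSum (e : Fin (2 * n + 1) → R) (B : Fin (2 * n + 1) → Fin (2 * n + 1) → R) : R :=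
  ∑ σ : Equiv.Perm (Fin (2 * n + 1)),
    ((Equiv.Perm.sign σ : ℤ) : R) *
      (e (σ ⟨0, by omega⟩) *
        ∏ i : Fin n, -B (σ ⟨2 * (i : ℕ) + 1, by omega⟩) (σ ⟨2 * (i : ℕ) + 2, by omega⟩))

theorem Int.cast_wedgeSum (e : Fin (2 * n + 1) → ℤ) (B : Fin (2 * n + 1) → Fin (2 * n + 1) → ℤ) :
    ((wedgeSum e B : ℤ) : R) = wedgeSum (fun i ↦ (e i : R)) (fun i j ↦ (B i j : R)) := by
  simp only [wedgeSum, Int.cast_sum, Int.cast_mul, Int.cast_prod, Int.cast_neg, Int.cast_id]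

end WedgeSum

theorem etaWedgeDPow_apply {L : Type*} [LieRing L] [LieAlgebra ℝ L]
    (η : Module.Dual ℝ L) (n : ℕ) (v : Fin (2 * n + 1) → L) :
    etaWedgeDPow η n v =
      ((2 : ℝ) ^ n * n.factorial)⁻¹ * wedgeSum (fun i ↦ η (v i)) (fun i j ↦ η ⁅v i, v j⁆) :=
  rfl

theorem apply_lie_eq_of_forall_lt {ι R L : Type*} [LinearOrder ι] [CommRing R] [LieRing L]
    [LieAlgebra R L] (η : Module.Dual R L) (v : ι → L) (A : ι → ι → R)
    (hskew : ∀ i j, A j i = -A i j) (hdiag : ∀ i, A i i = 0)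
    (hlt : ∀ i j, i < j → η ⁅v i, v j⁆ = A i j) (i j : ι) :
    η ⁅v i, v j⁆ = A i j := by
  rcases lt_trichotomy i j with hij | rfl | hji
  · exact hlt i j hij
  · rw [lie_self, map_zero, hdiag]
  · rw [← lie_skew, map_neg, hlt j i hji, hskew, neg_neg]

/-- Entry `(i, j)` is the `X₅`-coefficient of `⁅X_{i+1}, X_{j+1}⁆` in `L_{5,6}`. -/
def bracketCoordFive : Fin 5 → Fin 5 → ℤ :=
  ![![0, 0, 0, 1, 0], ![0, 0, 1, 0, 0], ![0, -1, 0, 0, 0], ![-1, 0, 0, 0, 0], ![0, 0, 0, 0, 0]]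

theorem bracketCoordFive_swap (i j : Fin 5) : bracketCoordFive j i = -bracketCoordFive i j := by
  revert i j
  decide

theorem bracketCoordFive_self (i : Fin 5) : bracketCoordFive i i = 0 := by
  revert i
  decide

set_option maxRecDepth 10000 in
theorem wedgeSum_bracketCoordFive :
    wedgeSum (n := 2) (Pi.single 4 1) bracketCoordFive = 8 := by
  decide

/-- The filiform Lie algebra `L_{5,6}`: `x₅` is a contact form. -/
theorem stmt9 {L : Type*} [LieRing L] [LieAlgebra ℝ L]
    (b : Module.Basis (Fin 5) ℝ L)
    (h12 : ⁅b 0, b 1⁆ = b 2) (h13 : ⁅b 0, b 2⁆ = b 3) (h14 : ⁅b 0, b 3⁆ = b 4)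
    (h23 : ⁅b 1, b 2⁆ = b 4)
    (hzero : ∀ i j : Fin 5, i < j →
      (i, j) ∉ ({(0, 1), (0, 2), (0, 3), (1, 2)} : Set (Fin 5 × Fin 5)) → ⁅b i, b j⁆ = 0) :
    etaWedgeDPow (b.coord 4) 2 ≠ 0 := by
  have hcoord : ∀ i, b.coord 4 (b i) = ((Pi.single 4 1 : Fin 5 → ℤ) i : ℝ) := fun i ↦ by
    simp [Module.Basis.coord_apply, Finsupp.single_apply, Pi.single_apply]
  have hbracket : ∀ i j, b.coord 4 ⁅b i, b j⁆ = (bracketCoordFive i j : ℝ) := by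
    refine apply_lie_eq_of_forall_lt _ _ _ (fun i j ↦ by rw [bracketCoordFive_swap, Int.cast_neg])
      (fun i ↦ by rw [bracketCoordFive_self, Int.cast_zero]) fun i j hij ↦ ?_
    by_cases hlisted : (i, j) ∈ ({(0, 1), (0, 2), (0, 3), (1, 2)} : Set (Fin 5 × Fin 5))
    · simp only [Set.mem_insert_iff, Set.mem_singleton_iff, Prod.mk.injEq] at hlisted
      rcases hlisted with ⟨rfl, rfl⟩ | ⟨rfl, rfl⟩ | ⟨rfl, rfl⟩ | ⟨rfl, rfl⟩ <;>
        simp [h12, h13, h14, h23, bracketCoordFive, Module.Basis.coord_apply]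
    · rw [hzero i j hij hlisted, map_zero, eq_comm, Int.cast_eq_zero]
      simp only [Set.mem_insert_iff, Set.mem_singleton_iff, Prod.mk.injEq, not_or] at hlisted
      revert i j
      decide
  have hvalue : etaWedgeDPow (b.coord 4) 2 b = 1 := by
    simp only [etaWedgeDPow_apply, hcoord, hbracket]
    rw [← Int.cast_wedgeSum, wedgeSum_bracketCoordFive]
    norm_num
  intro h
  simp [h] at hvalue
end
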